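/- For every integer n ≥ 1, the q-tangent numbers and q-Genocchi numbers are related by T_{2n+1,q} = (−1)^{n−1} · 2^{2n+1} · g_{2n+2,q} / [2n+2]_q. -/

import Mathlib

open Finset PowerSeries

/-- The `q`-number `[n]_q = (1 - q^n)/(1 - q)`. -/
noncomputable def qNum (q : ℂ) (n : ℕ) : ℂ := (1 - q ^ n) / (1 - q)

/-- The `q`-factorial `[n]_q!`. -/
noncomputable def qFact (q : ℂ) : ℕ → ℂ
  | 0 => 1
  | n + 1 => qNum q (n + 1) * qFact q n

/-- The `q`-shifted factorial `(a; q)_n = ∏_{j=0}^{n-1} (1 - q^j a)`. -/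
noncomputable def qShift (a q : ℂ) (n : ℕ) : ℂ := ∏ j ∈ Finset.range n, (1 - q ^ j * a)

/-- The Gaussian binomial coefficient `[n choose k]_q = (q;q)_n / ((q;q)_{n-k} (q;q)_k)`. -/
noncomputable def qBinom (q : ℂ) (n k : ℕ) : ℂ :=
  qShift q q n / (qShift q q (n - k) * qShift q q k)

/-- The formal power series (in `t`) `𝓔_q(tx) = Σ_{n≥0} (-1;q)_n (x)^n t^n / (2^n [n]_q!)`. -/
noncomputable def qExp (q x : ℂ) : PowerSeries ℂ :=
  PowerSeries.mk fun n => qShift (-1) q n * x ^ n / (2 ^ n * qFact q n)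

/-- The generating series `Σ_{n≥0} a_n t^n / [n]_q!` of a sequence `a`. -/
noncomputable def qGen (q : ℂ) (a : ℕ → ℂ) : PowerSeries ℂ :=
  PowerSeries.mk fun n => a n / qFact q n

/-- The `q`-addition `(x ⊕_q y)^n`. -/
noncomputable def qAdd (q x y : ℂ) (n : ℕ) : ℂ :=
  ∑ k ∈ Finset.range (n + 1),
    qBinom q n k * (qShift (-1) q k * qShift (-1) q (n - k) / 2 ^ n) * x ^ k * y ^ (n - k)

/-!
Since `tanh_q t = 1 - 2 / (𝓔_q(2t) + 1)`, the `q`-Genocchi series evaluated at `2t` is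
`4t / (𝓔_q(2t) + 1) = 2t (1 - tanh_q t)`. Comparing the coefficients of `t^(2n+2)` gives
`2^(2n+2) g_{2n+2,q} / [2n+2]_q! = -2 (-1)^n T_{2n+1,q} / [2n+1]_q!`, and `[2n+2]_q!` splits off
the factor `[2n+2]_q`.
-/

lemma one_sub_ne_zero_of_norm_lt_one {z : ℂ} (hz : ‖z‖ < 1) : 1 - z ≠ 0 := fun h => by
  simp [← eq_of_sub_eq_zero h] at hz

lemma qNum_ne_zero {q : ℂ} (hq : ‖q‖ < 1) {k : ℕ} (hk : k ≠ 0) : qNum q k ≠ 0 := by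
  have hqk : ‖q ^ k‖ < 1 := by rw [norm_pow]; exact pow_lt_one₀ (norm_nonneg q) hq hk
  exact div_ne_zero (one_sub_ne_zero_of_norm_lt_one hqk) (one_sub_ne_zero_of_norm_lt_one hq)

lemma qFact_ne_zero {q : ℂ} (hq : ‖q‖ < 1) : ∀ m : ℕ, qFact q m ≠ 0
  | 0 => one_ne_zero
  | m + 1 => mul_ne_zero (qNum_ne_zero hq m.succ_ne_zero) (qFact_ne_zero hq m)

lemma rescale_qExp (q a x : ℂ) : rescale a (qExp q x) = qExp q (a * x) := by
  ext m
  simp only [qExp, coeff_rescale, coeff_mk]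
  ring

lemma constantCoeff_qExp (q x : ℂ) : constantCoeff (qExp q x) = 1 := by
  simp [qExp, qShift, qFact]

section GeneratingSeries

variable {R : Type*} [CommRing R]

lemma two_X_mul_one_sub_eq_rescale [IsDomain R] {E G τ : R⟦X⟧}
    (hE : constantCoeff E + 1 ≠ 0) (hG : G * (E + 1) = 2 * X)
    (hτ : τ * (rescale 2 E + 1) = rescale 2 E - 1) :
    2 * X * (1 - τ) = rescale 2 G := by
  have hE₂ : rescale (2 : R) E + 1 ≠ 0 := fun h => hE <| by
    simpa only [map_add, coeff_rescale, pow_zero, one_mul, coeff_zero_eq_constantCoeff_apply,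
      map_one, map_zero] using congrArg (coeff 0) h
  refine mul_right_cancel₀ hE₂ ?_
  calc 2 * X * (1 - τ) * (rescale 2 E + 1) = 2 * X * 2 := by linear_combination (-2 * X) * hτ
    _ = rescale 2 (G * (E + 1)) := by rw [hG, map_mul, rescale_X, map_ofNat, map_ofNat]; ring
    _ = rescale 2 G * (rescale 2 E + 1) := by rw [map_mul, map_add, map_one]

lemma coeff_of_two_X_mul_one_sub_eq_rescale {G τ : R⟦X⟧} (h : 2 * X * (1 - τ) = rescale 2 G)
    {k : ℕ} (hk : k ≠ 0) : -(2 * coeff k τ) = 2 ^ (k + 1) * coeff (k + 1) G := by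
  have hcoeff := congrArg (coeff (k + 1)) h
  rwa [mul_assoc, ← map_ofNat C, coeff_C_mul, coeff_succ_X_mul, map_sub, coeff_one, if_neg hk,
    zero_sub, mul_neg, coeff_rescale] at hcoeff

end GeneratingSeries

theorem qTangent_eq_qGenocchi_general (q : ℂ) (hq1 : ‖q‖ < 1)
    (g : ℕ → ℂ) (hg : qGen q g * (qExp q 1 + 1) = 2 * PowerSeries.X)
    (tanhq : PowerSeries ℂ) (htanh : tanhq * (qExp q 2 + 1) = qExp q 2 - 1)
    (T : ℕ → ℂ)
    (hT : ∀ n : ℕ, 1 ≤ n →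
      PowerSeries.coeff (2 * n + 1) tanhq = (-1) ^ n * T (2 * n + 1) / qFact q (2 * n + 1))
    (n : ℕ) (hn : 1 ≤ n) :
    T (2 * n + 1) = (-1) ^ (n - 1) * 2 ^ (2 * n + 1) * g (2 * n + 2) / qNum q (2 * n + 2) := by
  rw [show qExp q 2 = rescale 2 (qExp q 1) by rw [rescale_qExp, mul_one]] at htanh
  have hseries := two_X_mul_one_sub_eq_rescale (by norm_num [constantCoeff_qExp]) hg htanh
  have hcoeff := coeff_of_two_X_mul_one_sub_eq_rescale hseries (by omega : 2 * n + 1 ≠ 0)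
  have hF₂ : qFact q (2 * n + 2) = qNum q (2 * n + 2) * qFact q (2 * n + 1) := rfl
  rw [hT n hn, qGen, coeff_mk, hF₂] at hcoeff
  have hF := qFact_ne_zero hq1 (2 * n + 1)
  have hN := qNum_ne_zero hq1 (by omega : 2 * n + 2 ≠ 0)
  have hsign : (-1 : ℂ) ^ (n - 1) * (-1) ^ n = -1 := by
    rw [← pow_add, show n - 1 + n = 2 * (n - 1) + 1 by omega, pow_succ, pow_mul]
    norm_num
  field_simp at hcoeff ⊢
  linear_combination ((-1 : ℂ) ^ (n - 1) / 2) * hcoeff + T (2 * n + 1) * qNum q (2 * n + 2) * hsign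

/-- Relation between the `q`-tangent numbers `T_{2n+1,q}` (defined by
`tanh_q t = (𝓔_q(2t)-1)/(𝓔_q(2t)+1) = Σ_{n≥1} (-1)^n T_{2n+1,q} t^{2n+1}/[2n+1]_q!`)
and the `q`-Genocchi numbers `g_{n,q}` (defined by `2t/(𝓔_q(t)+1) = Σ g_{n,q} t^n/[n]_q!`). -/
theorem qTangent_eq_qGenocchi (q : ℂ) (hq0 : 0 < ‖q‖) (hq1 : ‖q‖ < 1)
    (g : ℕ → ℂ) (hg : qGen q g * (qExp q 1 + 1) = 2 * PowerSeries.X)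
    (tanhq : PowerSeries ℂ) (htanh : tanhq * (qExp q 2 + 1) = qExp q 2 - 1)
    (T : ℕ → ℂ)
    (hT : ∀ n : ℕ, 1 ≤ n →
      PowerSeries.coeff (2 * n + 1) tanhq = (-1) ^ n * T (2 * n + 1) / qFact q (2 * n + 1))
    (n : ℕ) (hn : 1 ≤ n) :
    T (2 * n + 1) = (-1) ^ (n - 1) * 2 ^ (2 * n + 1) * g (2 * n + 2) / qNum q (2 * n + 2) :=
  qTangent_eq_qGenocchi_general q hq1 g hg tanhq htanh T hT n hn
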